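/- arXiv:2302.05689 — 3 statements merged into one kernel-verified Lean document; each statement's English description precedes it below -/
import Mathlib

section
/- Let H be a bounded self-adjoint operator on a Hilbert space with spectrum contained in (-∞, -σ], σ > 0, and let f : [0,∞) → X be continuous with ‖f(t)‖ ≤ C e^{-σt}. Then the mild solution ν(t) = exp(tH)ν₀ + ∫₀ᵗ exp((t-s)H) f(s) ds satisfies ‖ν(t)‖ ≤ C̃ (1+t) e^{-σ t} for some constant C̃ > 0 and all t ≥ 0. -/
/-!
By the continuous functional calculus, `‖exp (r • H)‖ = sup_{x ∈ σ(H)} e^{r x} ≤ e^{-σ r}` for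
`r ≥ 0`. In the Duhamel integral the integrand is then bounded by
`e^{-σ (t - s)} · C e^{-σ s} = C e^{-σ t}`, which does not depend on `s`: at resonance the two decay
rates cancel exactly, and integrating over `[0, t]` produces the extra factor `t`.
-/

open Set

theorem spectrum.subset_of_subset_image_ofReal {A : Type*} [Ring A] [Algebra ℂ A] [Algebra ℝ A]
    [IsScalarTower ℝ ℂ A] {a : A} {s : Set ℝ} (h : spectrum ℂ a ⊆ Complex.ofReal '' s) :
    spectrum ℝ a ⊆ s := by
  rw [← spectrum.preimage_algebraMap ℂ]
  rintro x hx
  obtain ⟨y, hy, hyx⟩ := h hx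
  exact (Complex.ofReal_injective hyx : y = x) ▸ hy

theorem norm_exp_smul_le_of_spectrum_subset_Iic {A : Type*} [CStarAlgebra A] {a : A}
    (ha : IsSelfAdjoint a) {c : ℝ} (hspec : spectrum ℝ a ⊆ Iic c) {s : ℝ} (hs : 0 ≤ s) :
    ‖NormedSpace.exp (s • a)‖ ≤ Real.exp (c * s) := by
  rw [← CFC.real_exp_eq_normedSpace_exp (.smul (IsSelfAdjoint.all s) ha),
    ← cfc_comp_smul s Real.exp a Real.continuous_exp.continuousOn ha]
  refine norm_cfc_le (Real.exp_nonneg _) fun x hx => ?_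
  rw [Real.norm_of_nonneg (Real.exp_nonneg _), Real.exp_le_exp, smul_eq_mul, mul_comm c]
  exact mul_le_mul_of_nonneg_left (hspec hx) hs

theorem norm_integral_apply_le_of_exp_decay {𝕜 E F : Type*} [NontriviallyNormedField 𝕜]
    [NormedAddCommGroup E] [NormedSpace 𝕜 E] [NormedAddCommGroup F] [NormedSpace 𝕜 F]
    [NormedSpace ℝ F] (T : ℝ → E →L[𝕜] F) (f : ℝ → E) {c C t : ℝ}
    (hT : ∀ r ≥ 0, ‖T r‖ ≤ Real.exp (c * r)) (hf : ∀ s ≥ 0, ‖f s‖ ≤ C * Real.exp (c * s))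
    (ht : 0 ≤ t) :
    ‖∫ s in (0:ℝ)..t, T (t - s) (f s)‖ ≤ C * t * Real.exp (c * t) := by
  have hpointwise : ∀ s ∈ uIoc 0 t, ‖T (t - s) (f s)‖ ≤ C * Real.exp (c * t) := by
    rintro s ⟨hs0, hst⟩
    rw [min_eq_left ht] at hs0
    rw [max_eq_right ht] at hst
    calc ‖T (t - s) (f s)‖ ≤ ‖T (t - s)‖ * ‖f s‖ := (T (t - s)).le_opNorm (f s)
      _ ≤ Real.exp (c * (t - s)) * (C * Real.exp (c * s)) :=
          mul_le_mul (hT _ (by linarith)) (hf s hs0.le) (norm_nonneg _) (Real.exp_nonneg _)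
      _ = C * Real.exp (c * t) := by rw [mul_left_comm, ← Real.exp_add]; ring_nf
  calc ‖∫ s in (0:ℝ)..t, T (t - s) (f s)‖ ≤ C * Real.exp (c * t) * |t - 0| :=
        intervalIntegral.norm_integral_le_of_norm_le_const hpointwise
    _ = C * t * Real.exp (c * t) := by rw [sub_zero, abs_of_nonneg ht]; ring

theorem mild_solution_decay_of_spectral_gap_resonant_general
    {X : Type*} [NormedAddCommGroup X] [InnerProductSpace ℂ X] [CompleteSpace X]
    (H : X →L[ℂ] X) (hH : IsSelfAdjoint H) (σ : ℝ)
    (hspec : spectrum ℂ H ⊆ (Complex.ofReal '' Set.Iic (-σ)))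
    (f : ℝ → X)
    (C : ℝ) (hC : 0 < C)
    (hfbound : ∀ t ≥ (0:ℝ), ‖f t‖ ≤ C * Real.exp (-σ * t))
    (ν₀ : X) (ν : ℝ → X)
    (hν : ∀ t ≥ (0:ℝ), ν t = NormedSpace.exp (t • H) ν₀
      + ∫ s in (0:ℝ)..t, NormedSpace.exp ((t - s) • H) (f s)) :
    ∃ C' > (0:ℝ), ∀ t ≥ (0:ℝ), ‖ν t‖ ≤ C' * (1 + t) * Real.exp (-σ * t) := by
  have hexp : ∀ r ≥ (0:ℝ), ‖NormedSpace.exp (r • H)‖ ≤ Real.exp (-σ * r) := fun r hr =>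
    norm_exp_smul_le_of_spectrum_subset_Iic hH (spectrum.subset_of_subset_image_ofReal hspec) hr
  refine ⟨‖ν₀‖ + C, by positivity, fun t ht => ?_⟩
  have hfree : ‖NormedSpace.exp (t • H) ν₀‖ ≤ Real.exp (-σ * t) * ‖ν₀‖ :=
    (NormedSpace.exp (t • H)).le_of_opNorm_le (hexp t ht) ν₀
  have hforced := norm_integral_apply_le_of_exp_decay (fun r => NormedSpace.exp (r • H)) f
    hexp hfbound ht
  rw [hν t ht]
  calc _ ≤ Real.exp (-σ * t) * ‖ν₀‖ + C * t * Real.exp (-σ * t) :=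
        (norm_add_le _ _).trans (add_le_add hfree hforced)
    _ ≤ (‖ν₀‖ + C) * (1 + t) * Real.exp (-σ * t) := by
        have he := Real.exp_nonneg (-σ * t)
        nlinarith [mul_nonneg (norm_nonneg ν₀) (mul_nonneg ht he), mul_nonneg hC.le he]

/-- resonant case `α = σ`: the mild solution satisfies
`‖ν(t)‖ ≤ C̃ (1+t) e^{-σ t}`. -/
theorem mild_solution_decay_of_spectral_gap_resonant
    {X : Type*} [NormedAddCommGroup X] [InnerProductSpace ℂ X] [CompleteSpace X]
    (H : X →L[ℂ] X) (hH : IsSelfAdjoint H) (σ : ℝ) (hσ : 0 < σ)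
    (hspec : spectrum ℂ H ⊆ (Complex.ofReal '' Set.Iic (-σ)))
    (f : ℝ → X) (hf : ContinuousOn f (Set.Ici 0))
    (C : ℝ) (hC : 0 < C)
    (hfbound : ∀ t ≥ (0:ℝ), ‖f t‖ ≤ C * Real.exp (-σ * t))
    (ν₀ : X) (ν : ℝ → X)
    (hν : ∀ t ≥ (0:ℝ), ν t = NormedSpace.exp (t • H) ν₀
      + ∫ s in (0:ℝ)..t, NormedSpace.exp ((t - s) • H) (f s)) :
    ∃ C' > (0:ℝ), ∀ t ≥ (0:ℝ), ‖ν t‖ ≤ C' * (1 + t) * Real.exp (-σ * t) :=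
  mild_solution_decay_of_spectral_gap_resonant_general H hH σ hspec f C hC hfbound ν₀ ν hν
end

section
/- Let H be a bounded self-adjoint operator on a Hilbert space with spectrum contained in (-∞, -σ], σ > 0, and let f : [0,∞) → X be continuous with f(t) → f* as t → ∞. Then the mild solution ν(t) = exp(tH)ν₀ + ∫₀ᵗ exp((t-s)H) f(s) ds of ν' = Hν + f satisfies ν(t) → -H⁻¹ f* as t → ∞. -/
/-!
`exp (t • H)` decays like `exp (-σ t)` by the continuous functional calculus. The equilibrium `w`
satisfies `∫₀ᵗ exp ((t - s) • H) f* ds = w - exp (t • H) w`, so `ν t - w` is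
`exp (t • H) (ν₀ - w)` plus the convolution of the decaying semigroup with `f - f*`. After the
substitution `u = t - s` the convolution tends to zero by dominated convergence, since `f - f*` is
bounded on `[0, ∞)` and tends to zero.
-/

open Filter Set MeasureTheory Topology NormedSpace

theorem IsSelfAdjoint.norm_exp_smul_le {A : Type*} [CStarAlgebra A] {a : A}
    (ha : IsSelfAdjoint a) {σ : ℝ} (hspec : spectrum ℂ a ⊆ Complex.ofReal '' Iic (-σ)) {t : ℝ}
    (ht : 0 ≤ t) : ‖NormedSpace.exp (t • a)‖ ≤ Real.exp (-σ * t) := by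
  rw [← CFC.real_exp_eq_normedSpace_exp ((IsSelfAdjoint.all t).smul ha),
    ← cfc_comp_smul t Real.exp a]
  refine norm_cfc_le (Real.exp_nonneg _) fun x hx => ?_
  obtain ⟨y, hy, hyx⟩ := hspec (spectrum.algebraMap_mem_iff ℂ |>.mpr hx)
  obtain rfl : y = x := by simpa using hyx
  rw [Real.norm_of_nonneg (Real.exp_nonneg _), Real.exp_le_exp, smul_eq_mul, neg_mul, mul_comm]
  nlinarith [show y ≤ -σ from hy]

section Semigroup

variable {X : Type*} [NormedAddCommGroup X] [NormedSpace ℂ X] [CompleteSpace X] (H : X →L[ℂ] X)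

theorem continuous_exp_smul : Continuous fun u : ℝ => exp (u • H) :=
  (differentiable_exp_smul_const ℝ H).continuous

theorem hasDerivAt_exp_smul_apply (v : X) (t : ℝ) :
    HasDerivAt (fun u : ℝ => exp (u • H) v) (H (exp (t • H) v)) t := by
  simpa [Function.comp_def] using
    ((ContinuousLinearMap.apply ℂ X v).restrictScalars ℝ).hasFDerivAt.comp_hasDerivAt t
      (hasDerivAt_exp_smul_const' (𝕂 := ℝ) H t)

variable {H}

theorem integral_exp_sub_smul_apply_eq {w y : X} (hw : H w = -y) (t : ℝ) :
    ∫ s in (0:ℝ)..t, exp ((t - s) • H) y = w - exp (t • H) w := by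
  have hderiv : ∀ s ∈ uIcc 0 t, HasDerivAt (fun s : ℝ => exp ((t - s) • H) w)
      (exp ((t - s) • H) y) s := fun s _ => by
    have hcomm : H (exp ((t - s) • H) w) = exp ((t - s) • H) (H w) :=
      congr($(((Commute.refl H).smul_right (t - s)).exp_right) w)
    simpa [hcomm, hw, Function.comp_def] using
      (hasDerivAt_exp_smul_apply H w (t - s)).scomp s ((hasDerivAt_id s).const_sub t)
  have hcont : Continuous fun s : ℝ => exp ((t - s) • H) y :=
    ((continuous_exp_smul H).comp (continuous_sub_left t)).clm_apply continuous_const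
  simpa using intervalIntegral.integral_eq_sub_of_hasDerivAt hderiv (hcont.intervalIntegrable 0 t)

theorem exp_smul_apply_add_integral_sub_eq {w y ν₀ : X} (hw : H w = -y) {f : ℝ → X} {t : ℝ}
    (ht : 0 ≤ t) (hf : ContinuousOn f (Icc 0 t)) :
    exp (t • H) ν₀ + (∫ s in (0:ℝ)..t, exp ((t - s) • H) (f s)) - w
      = exp (t • H) (ν₀ - w) + ∫ s in (0:ℝ)..t, exp ((t - s) • H) (f s - y) := by
  have hexp : ContinuousOn (fun s : ℝ => exp ((t - s) • H)) (uIcc 0 t) :=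
    ((continuous_exp_smul H).comp (continuous_sub_left t)).continuousOn
  rw [← uIcc_of_le ht] at hf
  simp only [map_sub]
  rw [intervalIntegral.integral_sub (hexp.clm_apply hf).intervalIntegrable
    (hexp.clm_apply continuousOn_const).intervalIntegrable, integral_exp_sub_smul_apply_eq hw t]
  abel

end Semigroup

theorem ContinuousOn.exists_norm_le_of_tendsto {E : Type*} [NormedAddCommGroup E] {g : ℝ → E}
    {a : ℝ} {l : E} (hg : ContinuousOn g (Ici a)) (hlim : Tendsto g atTop (𝓝 l)) :
    ∃ B, ∀ s ≥ a, ‖g s‖ ≤ B := by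
  obtain ⟨T, hT⟩ := eventually_atTop.1 (hlim.norm.eventually (eventually_le_nhds (lt_add_one ‖l‖)))
  obtain ⟨M, hM⟩ := (isCompact_Icc (a := a) (b := T)).exists_bound_of_continuousOn
    (hg.mono Icc_subset_Ici_self)
  refine ⟨max M (‖l‖ + 1), fun s hs => ?_⟩
  rcases le_total s T with hsT | hTs
  · exact (hM s ⟨hs, hsT⟩).trans (le_max_left _ _)
  · exact (hT s hTs).trans (le_max_right _ _)

section Convolution

variable {𝕜 E F : Type*} [NontriviallyNormedField 𝕜] [NormedAddCommGroup E] [NormedSpace 𝕜 E]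
  [NormedAddCommGroup F] [NormedSpace 𝕜 F] [NormedSpace ℝ F]

theorem intervalIntegral_apply_sub_eq_integral_indicator (S : ℝ → E →L[𝕜] F) (g : ℝ → E) {t : ℝ}
    (ht : 0 ≤ t) :
    ∫ s in (0:ℝ)..t, S (t - s) (g s) = ∫ u, (Ioc 0 t).indicator (fun u => S u (g (t - u))) u := by
  have hsubst := intervalIntegral.integral_comp_sub_left (fun u => S u (g (t - u))) t
    (a := 0) (b := t)
  simp only [sub_sub_cancel, sub_self, sub_zero] at hsubst
  rw [integral_indicator measurableSet_Ioc, ← intervalIntegral.integral_of_le ht, hsubst]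

theorem tendsto_integral_apply_sub_of_tendsto_zero {S : ℝ → E →L[𝕜] F} {k : ℝ → ℝ} {g : ℝ → E}
    (hS : ContinuousOn S (Ici 0)) (hk : IntegrableOn k (Ioi 0)) (hSk : ∀ u ≥ 0, ‖S u‖ ≤ k u)
    (hg : ContinuousOn g (Ici 0)) (hlim : Tendsto g atTop (𝓝 0)) :
    Tendsto (fun t => ∫ s in (0:ℝ)..t, S (t - s) (g s)) atTop (𝓝 0) := by
  obtain ⟨B, hB⟩ := hg.exists_norm_le_of_tendsto hlim
  have hB0 : 0 ≤ B := (norm_nonneg _).trans (hB 0 le_rfl)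
  set G : ℝ → ℝ → F := fun t => (Ioc 0 t).indicator fun u => S u (g (t - u))
  have hmeas : ∀ t, AEStronglyMeasurable (G t) volume := fun t =>
    (aestronglyMeasurable_indicator_iff measurableSet_Ioc).2 <| ContinuousOn.aestronglyMeasurable
      ((hS.mono (Ioc_subset_Ioi_self.trans Ioi_subset_Ici_self)).clm_apply
        (hg.comp (continuousOn_const.sub continuousOn_id) fun u hu => sub_nonneg.2 hu.2))
      measurableSet_Ioc
  have hbound : ∀ t, ∀ᵐ u, ‖G t u‖ ≤ (Ioi 0).indicator (fun u => k u * B) u := fun t =>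
    ae_of_all _ fun u => by
      dsimp only [G]
      by_cases hu : u ∈ Ioc 0 t
      · rw [indicator_of_mem hu, indicator_of_mem (Ioc_subset_Ioi_self hu)]
        exact ((S u).le_opNorm _).trans (mul_le_mul (hSk u hu.1.le) (hB _ (sub_nonneg.2 hu.2))
          (norm_nonneg _) ((norm_nonneg _).trans (hSk u hu.1.le)))
      · rw [indicator_of_notMem hu, norm_zero]
        exact indicator_nonneg (fun u hu => mul_nonneg ((norm_nonneg _).trans (hSk u hu.le)) hB0) u
  have hpointwise : ∀ u, Tendsto (fun t => G t u) atTop (𝓝 0) := fun u => by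
    rcases le_or_gt u 0 with hu | hu
    · simp only [G, indicator_of_notMem (fun h : u ∈ Ioc 0 _ => hu.not_gt h.1)]
      exact tendsto_const_nhds
    · have hshift : Tendsto (fun t => S u (g (t - u))) atTop (𝓝 0) := by
        simpa [Function.comp_def, ← sub_eq_add_neg] using ((S u).continuous.tendsto 0).comp
          (hlim.comp (tendsto_atTop_add_const_right _ (-u) tendsto_id))
      refine hshift.congr' ?_
      filter_upwards [eventually_ge_atTop u] with t ht
      exact (indicator_of_mem (show u ∈ Ioc 0 t from ⟨hu, ht⟩) fun u => S u (g (t - u))).symm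
  have hdom := tendsto_integral_filter_of_dominated_convergence _ (.of_forall hmeas)
    (.of_forall hbound) (IntegrableOn.integrable_indicator (hk.mul_const B) measurableSet_Ioi)
    (ae_of_all _ hpointwise)
  rw [integral_zero] at hdom
  exact hdom.congr' (eventually_atTop.2 ⟨0, fun t ht =>
    (intervalIntegral_apply_sub_eq_integral_indicator S g ht).symm⟩)

end Convolution

/-- if the forcing `f(t)` converges to `f*`, the mild solution of
`ν' = Hν + f` converges to `-H⁻¹ f*` (i.e. to the unique `w` with `H w = -f*`). -/
theorem mild_solution_tendsto_of_forcing_tendsto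
    {X : Type*} [NormedAddCommGroup X] [InnerProductSpace ℂ X] [CompleteSpace X]
    (H : X →L[ℂ] X) (hH : IsSelfAdjoint H) (σ : ℝ) (hσ : 0 < σ)
    (hspec : spectrum ℂ H ⊆ (Complex.ofReal '' Set.Iic (-σ)))
    (f : ℝ → X) (hf : ContinuousOn f (Set.Ici 0))
    (fstar : X) (hflim : Tendsto f atTop (nhds fstar))
    (ν₀ : X) (ν : ℝ → X)
    (hν : ∀ t ≥ (0:ℝ), ν t = NormedSpace.exp (t • H) ν₀
      + ∫ s in (0:ℝ)..t, NormedSpace.exp ((t - s) • H) (f s))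
    (w : X) (hw : H w = -fstar) :
    Tendsto ν atTop (nhds w) := by
  have hdecay : ∀ u ≥ (0:ℝ), ‖exp (u • H)‖ ≤ Real.exp (-σ * u) :=
    fun u hu => hH.norm_exp_smul_le hspec hu
  have hfree : Tendsto (fun t : ℝ => exp (t • H) (ν₀ - w)) atTop (𝓝 0) := by
    refine squeeze_zero_norm' (eventually_atTop.2 ⟨0, fun t ht =>
      ((exp (t • H)).le_opNorm _).trans (mul_le_mul_of_nonneg_right (hdecay t ht)
        (norm_nonneg _))⟩) ?_
    simpa using (Real.tendsto_exp_atBot.comp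
      (tendsto_id.const_mul_atTop_of_neg (neg_neg_of_pos hσ))).mul_const ‖ν₀ - w‖
  have hforced : Tendsto (fun t : ℝ => ∫ s in (0:ℝ)..t, exp ((t - s) • H) (f s - fstar))
      atTop (𝓝 0) :=
    tendsto_integral_apply_sub_of_tendsto_zero (continuous_exp_smul H).continuousOn
      (exp_neg_integrableOn_Ioi 0 hσ) hdecay (hf.sub continuousOn_const)
      (tendsto_sub_nhds_zero_iff.2 hflim)
  rw [← tendsto_sub_nhds_zero_iff, ← add_zero (0 : X)]
  refine (hfree.add hforced).congr' (eventually_atTop.2 ⟨0, fun t ht => ?_⟩)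
  dsimp only
  rw [hν t ht, exp_smul_apply_add_integral_sub_eq hw ht (hf.mono Icc_subset_Ici_self)]
end

section
/- Let E be a bounded self-adjoint operator on ℓ²(ℤ^d) with a simple eigenvalue 0 whose eigenfunction is f, and suppose the spectrum of E restricted to the orthogonal complement of f is contained in (-∞,-s] for some s > 0. Let g : [0,∞) → ℓ²(ℤ^d) be continuous with g(t) → g* as t → ∞, where ⟨f, g*⟩ ≠ 0. Then any mild solution m of m' = E m + g satisfies ⟨f, m(t)⟩ ~ t ⟨f, g*⟩ as t → ∞, and hence ‖m(t)‖ grows linearly: m(t)/t → (⟨f,g*⟩/⟨f,f⟩) f in ℓ². -/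
/-!
Since `E` is self-adjoint with `E f = 0`, pairing the equation with `f` gives
`d/dt ⟪f, m⟫ = ⟪f, g⟫ → ⟪f, g*⟫`, so `⟪f, m t⟫ / t → ⟪f, g*⟫` by the mean value theorem.
The component `y = P m` of `m` in `fᗮ` solves `y' = E' y + P g`, and the spectral gap of the
self-adjoint `E'` means `E' ≤ -s`, i.e. `re ⟪v, E' v⟫ ≤ -s ‖v‖²`. With `‖P g‖ ≤ B` for large `t`,
`‖y‖²` obeys the Grönwall inequality `(‖y‖²)' ≤ -s ‖y‖² + B² / s`, so `y` stays bounded and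
`y t / t → 0`; the claim follows from `m = (⟪f, m⟫ / ⟪f, f⟫) f + y`.
-/

open Filter Topology

local notation "⟪" x ", " y "⟫" => @inner ℂ _ _ x y

theorem tendsto_inv_smul_of_hasDerivAt_of_tendsto {X : Type*} [NormedAddCommGroup X]
    [NormedSpace ℝ X] {F h : ℝ → X} {L : X}
    (hF : ∀ᶠ t in atTop, HasDerivAt F (h t) t) (hh : Tendsto h atTop (𝓝 L)) :
    Tendsto (fun t => t⁻¹ • F t) atTop (𝓝 L) := by
  set G : ℝ → X := fun t => F t - t • L
  have hG : G =o[atTop] id := by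
    refine Asymptotics.isLittleO_iff.mpr fun c hc => ?_
    obtain ⟨T, hT⟩ := eventually_atTop.mp <| (hF.and (eventually_ge_atTop 0)).and <|
      (tendsto_iff_norm_sub_tendsto_zero.mp hh).eventually_le_const (half_pos hc)
    have hT0 : 0 ≤ T := (hT T le_rfl).1.2
    have hmv : ∀ t ≥ T, ‖G t - G T‖ ≤ c / 2 * (t - T) := fun t ht =>
      norm_image_sub_le_of_norm_deriv_le_segment' (f' := fun x => h x - L)
        (fun x hx => (((hT x hx.1).1.1.sub ((hasDerivAt_id' x).smul_const L)).congr_deriv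
          (by rw [one_smul])).hasDerivWithinAt)
        (fun x hx => (hT x hx.1).2) t ⟨ht, le_rfl⟩
    filter_upwards [eventually_ge_atTop T, eventually_ge_atTop (2 * ‖G T‖ / c)] with t hTt hGt
    have hGT : ‖G T‖ ≤ c / 2 * t := by
      rw [div_le_iff₀ hc] at hGt
      linarith
    calc ‖G t‖ ≤ ‖G T‖ + ‖G t - G T‖ := norm_le_insert' _ _
      _ ≤ c / 2 * t + c / 2 * (t - T) := add_le_add hGT (hmv t hTt)
      _ ≤ c * ‖id t‖ := by
        rw [id, Real.norm_of_nonneg (hT0.trans hTt)]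
        nlinarith
  have hlim := hG.tendsto_inv_smul_nhds_zero.add_const L
  rw [zero_add] at hlim
  refine hlim.congr' ?_
  filter_upwards [eventually_ne_atTop 0] with t ht
  simp [G, smul_sub, smul_smul, inv_mul_cancel₀ ht]

theorem gronwallBound_le_add_div_neg {δ K ε x : ℝ} (hδ : 0 ≤ δ) (hε : 0 ≤ ε) (hK : K < 0)
    (hx : 0 ≤ x) : gronwallBound δ K ε x ≤ δ + ε / -K := by
  have hexp : Real.exp (K * x) ≤ 1 :=
    Real.exp_le_one_iff.mpr (mul_nonpos_of_nonpos_of_nonneg hK.le hx)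
  have hεK : 0 ≤ ε / -K := div_nonneg hε (neg_nonneg.mpr hK.le)
  have hexp0 : 0 < Real.exp (K * x) := Real.exp_pos _
  have hflip : ε / K * (Real.exp (K * x) - 1) = ε / -K * (1 - Real.exp (K * x)) := by
    rw [div_neg]
    ring
  rw [gronwallBound_of_K_ne_0 hK.ne]
  dsimp only
  rw [hflip]
  exact add_le_add (mul_le_of_le_one_right hδ hexp) (mul_le_of_le_one_right hεK (by linarith))

theorem isBoundedUnder_norm_of_hasDerivAt_of_inner_le {K : Type*} [NormedAddCommGroup K]
    [InnerProductSpace ℝ K] {A : K → K} {s : ℝ} (hs : 0 < s)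
    (hA : ∀ v, inner ℝ v (A v) ≤ -s * ‖v‖ ^ 2) {y u : ℝ → K}
    (hy : ∀ᶠ t in atTop, HasDerivAt y (A (y t) + u t) t)
    (hu : IsBoundedUnder (· ≤ ·) atTop (fun t => ‖u t‖)) :
    IsBoundedUnder (· ≤ ·) atTop (fun t => ‖y t‖) := by
  obtain ⟨B, hB⟩ := hu
  obtain ⟨T, hT⟩ := eventually_atTop.mp (hy.and (eventually_map.mp hB))
  have hN : ∀ t ≥ T, HasDerivAt (fun t => ‖y t‖ ^ 2) (2 * inner ℝ (y t) (A (y t) + u t)) t :=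
    fun t ht => (hT t ht).1.norm_sq
  have hN' : ∀ t ≥ T, 2 * inner ℝ (y t) (A (y t) + u t) ≤ -s * ‖y t‖ ^ 2 + B ^ 2 / s := by
    intro t ht
    have hyu : inner ℝ (y t) (u t) ≤ ‖y t‖ * B :=
      (real_inner_le_norm _ _).trans (mul_le_mul_of_nonneg_left (hT t ht).2 (norm_nonneg _))
    have hamgm : 2 * ‖y t‖ * B ≤ s * ‖y t‖ ^ 2 + B ^ 2 / s := by
      have : s * ‖y t‖ ^ 2 + B ^ 2 / s - 2 * ‖y t‖ * B = (s * ‖y t‖ - B) ^ 2 / s := by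
        field_simp
        ring
      linarith [show 0 ≤ (s * ‖y t‖ - B) ^ 2 / s by positivity]
    rw [inner_add_right]
    linarith [hA (y t)]
  have hgronwall : ∀ t ≥ T, ‖y t‖ ^ 2 ≤ ‖y T‖ ^ 2 + B ^ 2 / s / s := by
    intro t ht
    refine (le_gronwallBound_of_liminf_deriv_right_le (a := T) (b := t)
      (fun x hx => (hN x hx.1).continuousAt.continuousWithinAt)
      (fun x hx r hr => (hN x hx.1).hasDerivWithinAt.liminf_right_slope_le hr) le_rfl
      (fun x hx => hN' x hx.1) t ⟨ht, le_rfl⟩).trans ?_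
    simpa using gronwallBound_le_add_div_neg (sq_nonneg ‖y T‖) (by positivity)
      (neg_lt_zero.mpr hs) (sub_nonneg.mpr ht)
  refine ⟨Real.sqrt (‖y T‖ ^ 2 + B ^ 2 / s / s), eventually_map.mpr ?_⟩
  filter_upwards [eventually_ge_atTop T] with t ht
  exact Real.le_sqrt_of_sq_le (hgronwall t ht)

theorem re_inner_apply_le_of_spectrum_re_le {K : Type*} [NormedAddCommGroup K]
    [InnerProductSpace ℂ K] [CompleteSpace K] {A : K →L[ℂ] K} (hA : IsSelfAdjoint A) {c : ℝ}
    (hspec : ∀ z ∈ spectrum ℂ A, z.re ≤ c) (v : K) :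
    (⟪v, A v⟫).re ≤ c * ‖v‖ ^ 2 := by
  have hle : A ≤ algebraMap ℝ (K →L[ℂ] K) c :=
    le_algebraMap_of_spectrum_le (fun x hx => by
      simpa using hspec x (spectrum.algebraMap_mem_iff ℂ |>.mpr hx)) hA
  have := ((ContinuousLinearMap.le_def _ _).mp hle).re_inner_nonneg_right v
  simpa [inner_sub_right, Algebra.algebraMap_eq_smul_one, inner_smul_right_eq_smul,
    inner_self_eq_norm_sq_to_K, ← Complex.ofReal_pow] using this

section

variable {𝕜 H : Type*} [RCLike 𝕜] [NormedAddCommGroup H] [InnerProductSpace 𝕜 H]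

theorem inner_apply_eq_zero_of_isSelfAdjoint [CompleteSpace H] {E : H →L[𝕜] H}
    (hE : IsSelfAdjoint E) {f : H} (hf : E f = 0) (x : H) : inner 𝕜 f (E x) = 0 := by
  simpa [hf] using (hE.isSymmetric f x).symm

theorem isSelfAdjoint_of_coe_apply [CompleteSpace H] {V : Submodule 𝕜 H} [CompleteSpace V]
    {E : H →L[𝕜] H} (hE : IsSelfAdjoint E) {E' : V →L[𝕜] V} (hE' : ∀ v, (E' v : H) = E v) :
    IsSelfAdjoint E' := by
  refine ContinuousLinearMap.isSelfAdjoint_iff_isSymmetric.mpr fun v w => ?_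
  simp only [Submodule.coe_inner, ContinuousLinearMap.coe_coe, hE']
  exact hE.isSymmetric v w

theorem orthogonalProjectionOnto_orthogonal_span_singleton_apply {E : H →L[𝕜] H} {f : H}
    (hf : E f = 0) {E' : (𝕜 ∙ f)ᗮ →L[𝕜] (𝕜 ∙ f)ᗮ} (hE' : ∀ v, (E' v : H) = E v) (x : H) :
    (𝕜 ∙ f)ᗮ.orthogonalProjectionOnto (E x) = E' ((𝕜 ∙ f)ᗮ.orthogonalProjectionOnto x) := by
  have hEx : E x = E ((𝕜 ∙ f)ᗮ.orthogonalProjectionOnto x) := by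
    obtain ⟨c, hc⟩ := Submodule.mem_span_singleton.mp ((𝕜 ∙ f).orthogonalProjectionOnto x).2
    conv_lhs => rw [← (𝕜 ∙ f).starProjection_add_starProjection_orthogonal x]
    rw [Submodule.starProjection_apply, ← hc, map_add, map_smul, hf, smul_zero, zero_add,
      Submodule.starProjection_apply]
  rw [hEx, ← hE', Submodule.orthogonalProjectionOnto_mem_subspace_eq_self]

theorem eq_inner_div_smul_add_orthogonalProjectionOnto (f x : H) :
    x = (inner 𝕜 f x / inner 𝕜 f f) • f + ((𝕜 ∙ f)ᗮ.orthogonalProjectionOnto x : H) := by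
  conv_lhs => rw [← (𝕜 ∙ f).starProjection_add_starProjection_orthogonal x]
  rw [Submodule.starProjection_singleton, Submodule.starProjection_apply,
    inner_self_eq_norm_sq_to_K, RCLike.ofReal_pow]

end

theorem isBoundedUnder_norm_orthogonalProjectionOnto_of_hasDerivAt {H : Type*}
    [NormedAddCommGroup H] [InnerProductSpace ℂ H] [CompleteSpace H] {E : H →L[ℂ] H}
    (hE : IsSelfAdjoint E) {f : H} (heig : E f = 0) {s : ℝ} (hs : 0 < s)
    {E' : (ℂ ∙ f)ᗮ →L[ℂ] (ℂ ∙ f)ᗮ} (hE' : ∀ v, (E' v : H) = E v)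
    (hgap : ∀ z ∈ spectrum ℂ E', z.re ≤ -s) {m g : ℝ → H}
    (hm : ∀ᶠ t in atTop, HasDerivAt m (E (m t) + g t) t)
    (hg : IsBoundedUnder (· ≤ ·) atTop (fun t => ‖g t‖)) :
    IsBoundedUnder (· ≤ ·) atTop (fun t => ‖(ℂ ∙ f)ᗮ.orthogonalProjectionOnto (m t)‖) := by
  let := InnerProductSpace.complexToReal (G := (ℂ ∙ f)ᗮ)
  set P := (ℂ ∙ f)ᗮ.orthogonalProjectionOnto
  have hy : ∀ᶠ t in atTop, HasDerivAt (fun t => P (m t)) (E' (P (m t)) + P (g t)) t :=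
    hm.mono fun t ht => by
      simpa [P, Function.comp_def, orthogonalProjectionOnto_orthogonal_span_singleton_apply heig
        hE'] using ((P.hasFDerivAt (x := m t)).restrictScalars ℝ).comp_hasDerivAt t ht
  refine isBoundedUnder_norm_of_hasDerivAt_of_inner_le hs
    (fun v => (real_inner_eq_re_inner ℂ v (E' v)).trans_le
      (re_inner_apply_le_of_spectrum_re_le (isSelfAdjoint_of_coe_apply hE hE') hgap v)) hy ?_
  obtain ⟨B, hB⟩ := hg
  exact ⟨‖P‖ * B, eventually_map.mpr <| (eventually_map.mp hB).mono fun t ht =>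
    (P.le_opNorm (g t)).trans (mul_le_mul_of_nonneg_left ht (norm_nonneg P))⟩

theorem critical_case_linear_growth_general
    (d : ℕ)
    (E : lp (fun _ : (Fin d → ℤ) => ℂ) 2 →L[ℂ] lp (fun _ : (Fin d → ℤ) => ℂ) 2)
    (hE : IsSelfAdjoint E)
    (f : lp (fun _ : (Fin d → ℤ) => ℂ) 2) (heig : E f = 0)
    (s : ℝ) (hs : 0 < s)
    (E' : (ℂ ∙ f)ᗮ →L[ℂ] (ℂ ∙ f)ᗮ)
    (hE'compat : ∀ v : (ℂ ∙ f)ᗮ, (E' v : lp (fun _ : (Fin d → ℤ) => ℂ) 2) = E v)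
    (hgap : ∀ z ∈ spectrum ℂ E', z.re ≤ -s)
    (g : ℝ → lp (fun _ : (Fin d → ℤ) => ℂ) 2)
    (gstar : lp (fun _ : (Fin d → ℤ) => ℂ) 2)
    (hglim : Tendsto g atTop (nhds gstar))
    (m : ℝ → lp (fun _ : (Fin d → ℤ) => ℂ) 2)
    (hm : ∀ t ≥ (0:ℝ), HasDerivAt m (E (m t) + g t) t) :
    Tendsto (fun t : ℝ => ⟪f, m t⟫ / (t : ℂ)) atTop (nhds ⟪f, gstar⟫) ∧
      Tendsto (fun t : ℝ => ((t : ℂ))⁻¹ • m t) atTop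
        (nhds ((⟪f, gstar⟫ / ⟪f, f⟫) • f)) := by
  have hm' : ∀ᶠ t in atTop, HasDerivAt m (E (m t) + g t) t := eventually_atTop.mpr ⟨0, hm⟩
  have hderiv_inner : ∀ᶠ t in atTop, HasDerivAt (fun t => ⟪f, m t⟫) ⟪f, g t⟫ t :=
    hm'.mono fun t ht => by
      simpa [inner_add_right, inner_apply_eq_zero_of_isSelfAdjoint hE heig] using
        (hasDerivAt_const t f).inner ℂ ht
  have hinner : Tendsto (fun t : ℝ => ⟪f, m t⟫ / (t : ℂ)) atTop (𝓝 ⟪f, gstar⟫) :=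
    (tendsto_inv_smul_of_hasDerivAt_of_tendsto hderiv_inner (tendsto_const_nhds.inner hglim)).congr
      fun t => by rw [Complex.real_smul, Complex.ofReal_inv, div_eq_inv_mul]
  have hproj_bdd := isBoundedUnder_norm_orthogonalProjectionOnto_of_hasDerivAt hE heig hs hE'compat
    hgap hm' hglim.norm.isBoundedUnder_le
  have hproj : Tendsto (fun t : ℝ => (t : ℂ)⁻¹ •
      ((ℂ ∙ f)ᗮ.orthogonalProjectionOnto (m t) : lp (fun _ : (Fin d → ℤ) => ℂ) 2))
      atTop (𝓝 0) :=
    (by simpa using tendsto_inv_atTop_zero.ofReal : Tendsto (fun t : ℝ => (t : ℂ)⁻¹) atTop (𝓝 0))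
      |>.zero_smul_isBoundedUnder_le hproj_bdd
  have hlim := ((hinner.div_const ⟪f, f⟫).smul_const f).add hproj
  rw [add_zero] at hlim
  refine ⟨hinner, hlim.congr fun t => ?_⟩
  conv_rhs => rw [eq_inner_div_smul_add_orthogonalProjectionOnto (𝕜 := ℂ) f (m t)]
  rw [smul_add, smul_smul]
  congr 2
  ring

/-- critical case: `E` bounded self-adjoint on `ℓ²(ℤ^d)` with simple
eigenvalue `0` (eigenfunction `f`) and spectral gap on `fᗮ`; if the forcing `g`
converges to `g*` with `⟪f,g*⟫ ≠ 0`, then `⟪f, m(t)⟫ ~ t ⟪f, g*⟫` and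
`m(t)/t → (⟪f,g*⟫/⟪f,f⟫) f` for any solution of `m' = E m + g`. -/
theorem critical_case_linear_growth
    (d : ℕ)
    (E : lp (fun _ : (Fin d → ℤ) => ℂ) 2 →L[ℂ] lp (fun _ : (Fin d → ℤ) => ℂ) 2)
    (hE : IsSelfAdjoint E)
    (f : lp (fun _ : (Fin d → ℤ) => ℂ) 2) (hf : f ≠ 0) (heig : E f = 0)
    (hsimple : ∀ v, E v = 0 → ∃ c : ℂ, v = c • f)
    (s : ℝ) (hs : 0 < s)
    (E' : (ℂ ∙ f)ᗮ →L[ℂ] (ℂ ∙ f)ᗮ)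
    (hE'compat : ∀ v : (ℂ ∙ f)ᗮ, (E' v : lp (fun _ : (Fin d → ℤ) => ℂ) 2) = E v)
    (hgap : ∀ z ∈ spectrum ℂ E', z.re ≤ -s)
    (g : ℝ → lp (fun _ : (Fin d → ℤ) => ℂ) 2) (hgcont : ContinuousOn g (Set.Ici 0))
    (gstar : lp (fun _ : (Fin d → ℤ) => ℂ) 2)
    (hglim : Tendsto g atTop (nhds gstar)) (hgstar : ⟪f, gstar⟫ ≠ 0)
    (m : ℝ → lp (fun _ : (Fin d → ℤ) => ℂ) 2)
    (hm : ∀ t ≥ (0:ℝ), HasDerivAt m (E (m t) + g t) t) :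
    Tendsto (fun t : ℝ => ⟪f, m t⟫ / (t : ℂ)) atTop (nhds ⟪f, gstar⟫) ∧
      Tendsto (fun t : ℝ => ((t : ℂ))⁻¹ • m t) atTop
        (nhds ((⟪f, gstar⟫ / ⟪f, f⟫) • f)) :=
  critical_case_linear_growth_general d E hE f heig s hs E' hE'compat hgap g gstar hglim m hm
end
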